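/- Let A and B be finite dimensional G-graded algebras such that every element of supp(A) commutes with every element of supp(B). If A and B are graded Frobenius, then the tensor product A ⊗ B, with grading (A⊗B)_σ = ⊕_{gh=σ} A_g ⊗ B_h, is graded Frobenius; the same holds with 'graded symmetric' in place of 'graded Frobenius'. -/

import Mathlib

/-- The degree-`g` component of the dual of a graded module:
`(M*)_g = { f | f(M_h) = 0 for all h ≠ g⁻¹ }`. -/
def dualComponent {k M : Type*} [Field k] [AddCommGroup M] [Module k M]
    {G : Type*} [Group G] (ℳ : G → Submodule k M) (g : G) :
    Submodule k (Module.Dual k M) where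
  carrier := {f | ∀ h : G, h ≠ g⁻¹ → ∀ x ∈ ℳ h, f x = 0}
  zero_mem' := by intro h hh x hx; rfl
  add_mem' := by
    intro f₁ f₂ h₁ h₂ h hh x hx
    simp [h₁ h hh x hx, h₂ h hh x hx]
  smul_mem' := by
    intro c f hf h hh x hx
    simp [hf h hh x hx]

/-- `A` is graded symmetric: `A ≅ A*` as graded `(A,A)`-bimodules, where the left
action on `A*` is `(a • f) y = f (y * a)`, the right action is `(f • a) y = f (a * y)`,
and `(A*)_g = { f | f(A_h) = 0 for h ≠ g⁻¹ }`. -/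
def IsGradedSymmetric {k A : Type*} [Field k] [Ring A] [Algebra k A]
    {G : Type*} [Group G] (𝒜 : G → Submodule k A) : Prop :=
  ∃ φ : A ≃ₗ[k] Module.Dual k A,
    (∀ a x y : A, φ (a * x) y = φ x (y * a)) ∧
    (∀ a x y : A, φ (x * a) y = φ x (a * y)) ∧
    ∀ g : G, ∀ x ∈ 𝒜 g, φ x ∈ dualComponent 𝒜 g

/-- `A` is `σ`-graded Frobenius: `A(σ) ≅ A*` as graded left `A`-modules. -/
def IsSigmaGradedFrobenius {k A : Type*} [Field k] [Ring A] [Algebra k A]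
    {G : Type*} [Group G] (𝒜 : G → Submodule k A) (σ : G) : Prop :=
  ∃ φ : A ≃ₗ[k] Module.Dual k A,
    (∀ a x y : A, φ (a * x) y = φ x (y * a)) ∧
    ∀ g : G, ∀ x ∈ 𝒜 (g * σ), φ x ∈ dualComponent 𝒜 g

/-!
The Frobenius isomorphism of `A ⊗ B` is `φA ⊗ φB` followed by `A* ⊗ B* ≃ (A ⊗ B)*`.
Compatibility of `φ` with the left (resp. right) action says `φ a y = φ 1 (y * a)`
(resp. `φ 1 (a * y)`), so it is a statement about the form `φ 1`, and on `A ⊗ B` this form is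
the product of the forms of `A` and `B`. For the grading: with `a ∈ A_g`, `b ∈ B_h`, the
functional `φ (a ⊗ₜ b)` vanishes off `A_{g⁻¹} ⊗ B_{h⁻¹}`, which lies in degree
`g⁻¹ h⁻¹ = (h g)⁻¹`; this is `(g h)⁻¹` because `g` and `h` commute once `a, b ≠ 0`.
-/

open TensorProduct Module

theorem forall_apply_mul_left_iff {R k : Type*} [Monoid R] (β : R → R → k) :
    (∀ a x y : R, β (a * x) y = β x (y * a)) ↔ ∀ a y : R, β a y = β 1 (y * a) := by
  refine ⟨fun h a y => by simpa using h a 1 y, fun h a x y => ?_⟩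
  rw [h, h x, mul_assoc]

theorem forall_apply_mul_right_iff {R k : Type*} [Monoid R] (β : R → R → k) :
    (∀ a x y : R, β (x * a) y = β x (a * y)) ↔ ∀ a y : R, β a y = β 1 (a * y) := by
  refine ⟨fun h a y => by simpa using h a 1 y, fun h a x y => ?_⟩
  rw [h, h x, mul_assoc]

section TensorDual

variable {k A B : Type*} [Field k] [Ring A] [Algebra k A] [Ring B] [Algebra k B]
  [FiniteDimensional k A] [FiniteDimensional k B]
  (φA : A ≃ₗ[k] Dual k A) (φB : B ≃ₗ[k] Dual k B)

noncomputable def tensorDualEquiv : A ⊗[k] B ≃ₗ[k] Dual k (A ⊗[k] B) :=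
  TensorProduct.congr φA φB ≪≫ₗ dualDistribEquiv k A B

@[simp]
theorem tensorDualEquiv_tmul_tmul (a u : A) (b v : B) :
    tensorDualEquiv φA φB (a ⊗ₜ b) (u ⊗ₜ v) = φA a u * φB b v := by
  simp [tensorDualEquiv]

variable {φA φB}

theorem tensorDualEquiv_mul_left (hA : ∀ a x y : A, φA (a * x) y = φA x (y * a))
    (hB : ∀ a x y : B, φB (a * x) y = φB x (y * a)) :
    ∀ a x y : A ⊗[k] B, tensorDualEquiv φA φB (a * x) y = tensorDualEquiv φA φB x (y * a) := by
  rw [forall_apply_mul_left_iff fun x y => tensorDualEquiv φA φB x y]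
  replace hA := (forall_apply_mul_left_iff fun x y => φA x y).1 hA
  replace hB := (forall_apply_mul_left_iff fun x y => φB x y).1 hB
  suffices h : (tensorDualEquiv φA φB).toLinearMap =
      (LinearMap.mul k (A ⊗[k] B)).flip.compr₂ (tensorDualEquiv φA φB 1) from
    fun a y => LinearMap.congr_fun₂ h a y
  ext a₁ a₂ y₁ y₂
  simp [Algebra.TensorProduct.one_def, hA a₁ y₁, hB a₂ y₂]

theorem tensorDualEquiv_mul_right (hA : ∀ a x y : A, φA (x * a) y = φA x (a * y))
    (hB : ∀ a x y : B, φB (x * a) y = φB x (a * y)) :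
    ∀ a x y : A ⊗[k] B, tensorDualEquiv φA φB (x * a) y = tensorDualEquiv φA φB x (a * y) := by
  rw [forall_apply_mul_right_iff fun x y => tensorDualEquiv φA φB x y]
  replace hA := (forall_apply_mul_right_iff fun x y => φA x y).1 hA
  replace hB := (forall_apply_mul_right_iff fun x y => φB x y).1 hB
  suffices h : (tensorDualEquiv φA φB).toLinearMap =
      (LinearMap.mul k (A ⊗[k] B)).compr₂ (tensorDualEquiv φA φB 1) from
    fun a y => LinearMap.congr_fun₂ h a y
  ext a₁ a₂ y₁ y₂
  simp [Algebra.TensorProduct.one_def, hA a₁ y₁, hB a₂ y₂]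

end TensorDual

section TensorGrading

variable {k A B G : Type*} [Field k] [Ring A] [Algebra k A] [Ring B] [Algebra k B]

def tensorGrading [Mul G] (𝒜 : G → Submodule k A) (ℬ : G → Submodule k B) (σ : G) :
    Submodule k (A ⊗[k] B) :=
  ⨆ p : {p : G × G // p.1 * p.2 = σ},
    LinearMap.range (TensorProduct.map (𝒜 p.1.1).subtype (ℬ p.1.2).subtype)

theorem tensorGrading_le_iff [Mul G] {𝒜 : G → Submodule k A} {ℬ : G → Submodule k B} {σ : G}
    {P : Submodule k (A ⊗[k] B)} :
    tensorGrading 𝒜 ℬ σ ≤ P ↔ ∀ g h, g * h = σ → ∀ a ∈ 𝒜 g, ∀ b ∈ ℬ h, a ⊗ₜ b ∈ P := by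
  simp only [tensorGrading, iSup_le_iff, range_map_eq_span_tmul, Submodule.span_le,
    Set.ofPred_subset, Subtype.forall, Prod.forall, forall_exists_index, Submodule.subtype_apply,
    SetLike.mem_coe]
  exact forall₃_congr fun _ _ _ =>
    ⟨fun H a ha b hb => H _ a ha b hb rfl, fun H _ a ha b hb hx => hx ▸ H a ha b hb⟩

theorem tensorDualEquiv_mem_dualComponent [FiniteDimensional k A] [FiniteDimensional k B]
    [Group G] {𝒜 : G → Submodule k A} {ℬ : G → Submodule k B}
    (hsupp : ∀ g h : G, 𝒜 g ≠ ⊥ → ℬ h ≠ ⊥ → g * h = h * g)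
    {φA : A ≃ₗ[k] Dual k A} {φB : B ≃ₗ[k] Dual k B}
    (hA : ∀ g : G, ∀ x ∈ 𝒜 g, φA x ∈ dualComponent 𝒜 g)
    (hB : ∀ g : G, ∀ x ∈ ℬ g, φB x ∈ dualComponent ℬ g) (σ : G) :
    ∀ x ∈ tensorGrading 𝒜 ℬ σ,
      tensorDualEquiv φA φB x ∈ dualComponent (tensorGrading 𝒜 ℬ) σ := by
  suffices h : tensorGrading 𝒜 ℬ σ ≤
      (dualComponent (tensorGrading 𝒜 ℬ) σ).comap (tensorDualEquiv φA φB).toLinearMap from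
    fun x hx => h hx
  refine tensorGrading_le_iff.2 fun g₁ g₂ hσ a ha b hb τ hτ y hy => ?_
  refine (tensorGrading_le_iff (P := LinearMap.ker (tensorDualEquiv φA φB (a ⊗ₜ b)))).2
    (fun h₁ h₂ hτ' u hu v hv => ?_) hy
  rw [LinearMap.mem_ker, tensorDualEquiv_tmul_tmul]
  by_cases h₁_eq : h₁ = g₁⁻¹
  swap
  · rw [hA g₁ a ha h₁ h₁_eq u hu, zero_mul]
  by_cases h₂_eq : h₂ = g₂⁻¹
  swap
  · rw [hB g₂ b hb h₂ h₂_eq v hv, mul_zero]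
  have h_ne_comm : g₂ * g₁ ≠ g₁ * g₂ := fun h_comm =>
    hτ (by rw [← hτ', ← hσ, h₁_eq, h₂_eq, ← mul_inv_rev, h_comm])
  obtain h_bot | h_bot : 𝒜 g₁ = ⊥ ∨ ℬ g₂ = ⊥ := by
    by_contra! h_ne
    exact h_ne_comm (hsupp g₁ g₂ h_ne.1 h_ne.2).symm
  · rw [(Submodule.eq_bot_iff _).1 h_bot a ha]; simp
  · rw [(Submodule.eq_bot_iff _).1 h_bot b hb]; simp

end TensorGrading

open TensorProduct in
theorem tensorProduct_gradedFrobenius_and_gradedSymmetric_general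
    {k A B : Type*} [Field k] [Ring A] [Algebra k A] [Ring B] [Algebra k B]
    [FiniteDimensional k A] [FiniteDimensional k B]
    {G : Type*} [Group G]
    (𝒜 : G → Submodule k A) (ℬ : G → Submodule k B)
    (hsupp : ∀ g h : G, 𝒜 g ≠ ⊥ → ℬ h ≠ ⊥ → g * h = h * g) :
    (IsSigmaGradedFrobenius 𝒜 (1 : G) → IsSigmaGradedFrobenius ℬ (1 : G) →
      IsSigmaGradedFrobenius
        (fun σ : G => ⨆ p : {p : G × G // p.1 * p.2 = σ},
          LinearMap.range (TensorProduct.map (𝒜 p.1.1).subtype (ℬ p.1.2).subtype))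
        (1 : G)) ∧
    (IsGradedSymmetric 𝒜 → IsGradedSymmetric ℬ →
      IsGradedSymmetric
        (fun σ : G => ⨆ p : {p : G × G // p.1 * p.2 = σ},
          LinearMap.range (TensorProduct.map (𝒜 p.1.1).subtype (ℬ p.1.2).subtype))) := by
  constructor
  · rintro ⟨φA, hA_left, hA𝒜⟩ ⟨φB, hB_left, hBℬ⟩
    simp only [mul_one] at hA𝒜 hBℬ
    refine ⟨tensorDualEquiv φA φB, tensorDualEquiv_mul_left hA_left hB_left, fun σ => ?_⟩
    rw [mul_one]
    exact tensorDualEquiv_mem_dualComponent hsupp hA𝒜 hBℬ σ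
  · rintro ⟨φA, hA_left, hA_right, hA𝒜⟩ ⟨φB, hB_left, hB_right, hBℬ⟩
    exact ⟨tensorDualEquiv φA φB, tensorDualEquiv_mul_left hA_left hB_left,
      tensorDualEquiv_mul_right hA_right hB_right,
      tensorDualEquiv_mem_dualComponent hsupp hA𝒜 hBℬ⟩

open TensorProduct in
/-- let `A`, `B` be finite dimensional `G`-graded algebras such that every
element of `supp(A)` commutes with every element of `supp(B)`.  If `A` and `B` are
graded Frobenius then so is `A ⊗ B` with the grading `(A⊗B)_σ = ⊕_{gh=σ} A_g ⊗ B_h`;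
the same holds with "graded symmetric" in place of "graded Frobenius". -/
theorem tensorProduct_gradedFrobenius_and_gradedSymmetric
    {k A B : Type*} [Field k] [Ring A] [Algebra k A] [Ring B] [Algebra k B]
    [FiniteDimensional k A] [FiniteDimensional k B]
    {G : Type*} [Group G] [DecidableEq G]
    (𝒜 : G → Submodule k A) (ℬ : G → Submodule k B)
    (hAinternal : DirectSum.IsInternal 𝒜) (hBinternal : DirectSum.IsInternal ℬ)
    (hAone : (1 : A) ∈ 𝒜 1) (hBone : (1 : B) ∈ ℬ 1)
    (hAmul : ∀ {g h : G}, ∀ a ∈ 𝒜 g, ∀ b ∈ 𝒜 h, a * b ∈ 𝒜 (g * h))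
    (hBmul : ∀ {g h : G}, ∀ a ∈ ℬ g, ∀ b ∈ ℬ h, a * b ∈ ℬ (g * h))
    (hsupp : ∀ g h : G, 𝒜 g ≠ ⊥ → ℬ h ≠ ⊥ → g * h = h * g) :
    (IsSigmaGradedFrobenius 𝒜 (1 : G) → IsSigmaGradedFrobenius ℬ (1 : G) →
      IsSigmaGradedFrobenius
        (fun σ : G => ⨆ p : {p : G × G // p.1 * p.2 = σ},
          LinearMap.range (TensorProduct.map (𝒜 p.1.1).subtype (ℬ p.1.2).subtype))
        (1 : G)) ∧
    (IsGradedSymmetric 𝒜 → IsGradedSymmetric ℬ →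
      IsGradedSymmetric
        (fun σ : G => ⨆ p : {p : G × G // p.1 * p.2 = σ},
          LinearMap.range (TensorProduct.map (𝒜 p.1.1).subtype (ℬ p.1.2).subtype))) :=
  tensorProduct_gradedFrobenius_and_gradedSymmetric_general 𝒜 ℬ hsupp
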